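/- arXiv:2308.06158 — 8 statements merged into one kernel-verified Lean document; each statement's English description precedes it below -/
import Mathlib

section
/- Let q be a nonzero real number, x a nonzero real number, and let f : ℝ → ℝ be differentiable at -1/(q·x). Then the operator D₀ anti-commutes with precomposition by S_q: D₀(f ∘ S_q)(x) = -(D₀ f)(S_q(x)), i.e., (1+(x-1)q)·(1+(q-1)x)·(d/dx)[f(-1/(q·x))] = -(1+(S_q(x)-1)q)·(1+(q-1)·S_q(x))·f'(S_q(x)) where S_q(x) = -1/(q·x). -/
/-! By the chain rule the left side picks up `S_q'(x) = 1 / (q x²)`. Meanwhile `S_q` swaps the two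
linear factors of the weight of `D₀`, up to the factors `-1/x` and `1/(q x)`, whose product
`-1/(q x²)` is minus that Jacobian. -/

lemma hasDerivAt_neg_one_div_mul {q x : ℝ} (hq : q ≠ 0) (hx : x ≠ 0) :
    HasDerivAt (fun y => -1 / (q * y)) (1 / (q * x ^ 2)) x := by
  have hfun : (fun y => -1 / (q * y)) = fun y => -1 / q * y⁻¹ := by
    funext y
    rw [div_mul_eq_div_div, div_eq_mul_inv]
  rw [hfun]
  exact ((hasDerivAt_inv hx).const_mul (-1 / q)).congr_deriv (by field_simp)

lemma one_add_sub_one_mul_neg_one_div_mul {q x : ℝ} (hq : q ≠ 0) (hx : x ≠ 0) :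
    1 + (-1 / (q * x) - 1) * q = -(1 + (q - 1) * x) / x := by
  field_simp
  ring

lemma one_add_mul_neg_one_div_mul {q x : ℝ} (hq : q ≠ 0) (hx : x ≠ 0) :
    1 + (q - 1) * (-1 / (q * x)) = (1 + (x - 1) * q) / (q * x) := by
  field_simp
  ring

/-- The operator `D₀ f x = (1+(x-1)q)(1+(q-1)x)·f'(x)` anti-commutes with
precomposition by `S_q(x) = -1/(qx)`. -/
theorem D0_anticommutes_Sq (q x : ℝ) (hq : q ≠ 0) (hx : x ≠ 0) (f : ℝ → ℝ)
    (hf : DifferentiableAt ℝ f (-1 / (q * x))) :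
    (1 + (x - 1) * q) * (1 + (q - 1) * x) * deriv (fun y => f (-1 / (q * y))) x
      = -((1 + (-1 / (q * x) - 1) * q) * (1 + (q - 1) * (-1 / (q * x)))
          * deriv f (-1 / (q * x))) := by
  have hchain : deriv (fun y => f (-1 / (q * y))) x = deriv f (-1 / (q * x)) * (1 / (q * x ^ 2)) :=
    (hf.hasDerivAt.comp x (hasDerivAt_neg_one_div_mul hq hx)).deriv
  rw [hchain, one_add_sub_one_mul_neg_one_div_mul hq hx, one_add_mul_neg_one_div_mul hq hx]
  field_simp
end

section
/- Let q be a real number, let f : ℝ → ℝ be differentiable with derivative f' differentiable at a point x ∈ ℝ. Then the operators D₋₁, D₀, D₁ satisfy the deformed sl₂ commutation relations at x: (D₀(D₁f) - D₁(D₀f))(x) = (q²-q+1)·(D₁f)(x) + (1-q)·(D₀f)(x); (D₀(D₋₁f) - D₋₁(D₀f))(x) = -(q²-q+1)·(D₋₁f)(x) + (1-q)·(D₀f)(x); and (D₋₁(D₁f) - D₁(D₋₁f))(x) = 2·(D₀f)(x) + (1-q)·((D₁f)(x) - (D₋₁f)(x)). -/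
/-!
Each `Dᵢ` is a first-order operator `f ↦ cᵢ · f'` with a quadratic coefficient `cᵢ`. For two
such operators the second-order terms cancel in the commutator, `[p ∂, r ∂] = (p r' - r p') ∂`,
so each relation reduces to a polynomial identity between the coefficients.
-/

/-- `(D₋₁ f)(x) = (1+(q-1)x)·f'(x)`. -/
noncomputable def Dm1 (q : ℝ) (f : ℝ → ℝ) (x : ℝ) : ℝ := (1 + (q - 1) * x) * deriv f x

/-- `(D₀ f)(x) = (1+(x-1)q)(1+(q-1)x)·f'(x)`. -/
noncomputable def D0 (q : ℝ) (f : ℝ → ℝ) (x : ℝ) : ℝ :=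
  (1 + (x - 1) * q) * (1 + (q - 1) * x) * deriv f x

/-- `(D₁ f)(x) = (1+(x-1)q)·x·f'(x)`. -/
noncomputable def D1 (q : ℝ) (f : ℝ → ℝ) (x : ℝ) : ℝ := (1 + (x - 1) * q) * x * deriv f x

theorem commutator_mul_deriv {𝕜 : Type*} [NontriviallyNormedField 𝕜] {p r f : 𝕜 → 𝕜}
    {p' r' x : 𝕜} (hp : HasDerivAt p p' x) (hr : HasDerivAt r r' x)
    (hf : DifferentiableAt 𝕜 (deriv f) x) :
    p x * deriv (fun y => r y * deriv f y) x - r x * deriv (fun y => p y * deriv f y) x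
      = (p x * r' - r x * p') * deriv f x := by
  rw [(hr.fun_mul hf.hasDerivAt).deriv, (hp.fun_mul hf.hasDerivAt).deriv]
  ring

theorem deformed_sl2_relations_general (q : ℝ) (f : ℝ → ℝ) (x : ℝ)
    (hf' : DifferentiableAt ℝ (deriv f) x) :
    (D0 q (D1 q f) x - D1 q (D0 q f) x
        = (q ^ 2 - q + 1) * D1 q f x + (1 - q) * D0 q f x) ∧
    (D0 q (Dm1 q f) x - Dm1 q (D0 q f) x
        = -(q ^ 2 - q + 1) * Dm1 q f x + (1 - q) * D0 q f x) ∧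
    (Dm1 q (D1 q f) x - D1 q (Dm1 q f) x
        = 2 * D0 q f x + (1 - q) * (D1 q f x - Dm1 q f x)) := by
  have hm : HasDerivAt (fun y : ℝ => 1 + (q - 1) * y) (q - 1) x := by
    simpa using ((hasDerivAt_id' x).const_mul (q - 1)).const_add 1
  have hp : HasDerivAt (fun y : ℝ => 1 + (y - 1) * q) q x := by
    simpa using (((hasDerivAt_id' x).sub_const 1).mul_const q).const_add 1
  have h0 := hp.fun_mul hm
  have h1 := hp.fun_mul (hasDerivAt_id' x)
  refine ⟨?_, ?_, ?_⟩
  · calc _ = _ := commutator_mul_deriv h0 h1 hf'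
      _ = _ := by simp only [D0, D1]; ring
  · calc _ = _ := commutator_mul_deriv h0 hm hf'
      _ = _ := by simp only [D0, Dm1]; ring
  · calc _ = _ := commutator_mul_deriv hm h1 hf'
      _ = _ := by simp only [D0, D1, Dm1]; ring

/-- The operators `D₋₁, D₀, D₁` satisfy the deformed `sl₂` commutation relations. -/
theorem deformed_sl2_relations (q : ℝ) (f : ℝ → ℝ) (x : ℝ)
    (hf : Differentiable ℝ f) (hf' : DifferentiableAt ℝ (deriv f) x) :
    (D0 q (D1 q f) x - D1 q (D0 q f) x
        = (q ^ 2 - q + 1) * D1 q f x + (1 - q) * D0 q f x) ∧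
    (D0 q (Dm1 q f) x - Dm1 q (D0 q f) x
        = -(q ^ 2 - q + 1) * Dm1 q f x + (1 - q) * D0 q f x) ∧
    (Dm1 q (D1 q f) x - D1 q (Dm1 q f) x
        = 2 * D0 q f x + (1 - q) * (D1 q f x - Dm1 q f x)) :=
  deformed_sl2_relations_general q f x hf'
end

section
/- Let L be a Lie algebra over ℝ, q a real number with q > 0, and let d₋₁, d₀, d₁ ∈ L satisfy [d₀,d₁] = (q²-q+1)·d₁ + (1-q)·d₀, [d₀,d₋₁] = -(q²-q+1)·d₋₁ + (1-q)·d₀, and [d₋₁,d₁] = 2·d₀ + (1-q)·(d₁ - d₋₁). Then the elements f = q^{-1/2}·(d₋₁ + ((q-1)/(q²-q+1))·d₀), h = (1/(q²-q+1))·d₀, and e = q^{-1/2}·(d₁ + ((1-q)/(q²-q+1))·d₀) satisfy the standard sl₂ relations [h,e] = e, [h,f] = -f, [e,f] = -2·h. -/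
/-!
After subtracting from `d₁` and `d₋₁` suitable multiples of `d₀`, the bracket with
`h = d₀ / (q² - q + 1)` acts by `±1`, and the remaining bracket becomes
`⁅e, f⁆ = -2q • h`, because `(q² - q + 1) - (1 - q)² = q`. Rescaling `e` and `f` by `q^{-1/2}`
removes the factor `q`.
-/

namespace DeformedSl2

variable {K L : Type*} [Field K] [LieRing L] [LieAlgebra K L] {q : K} {dm1 d0 d1 : L}

variable (q) in
def h (d0 : L) : L := (1 / (q ^ 2 - q + 1)) • d0

variable (q) in
def e (d0 d1 : L) : L := d1 + ((1 - q) / (q ^ 2 - q + 1)) • d0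

variable (q) in
def f (dm1 d0 : L) : L := dm1 + ((q - 1) / (q ^ 2 - q + 1)) • d0

theorem lie_h_e (hD : q ^ 2 - q + 1 ≠ 0)
    (h01 : ⁅d0, d1⁆ = (q ^ 2 - q + 1) • d1 + (1 - q) • d0) :
    ⁅h q d0, e q d0 d1⁆ = e q d0 d1 := by
  simp only [h, e, lie_add, smul_lie, lie_smul, lie_self, smul_zero, add_zero, h01, smul_add,
    smul_smul]
  -- keeps `q ^ 2 - q + 1` an atom, which `match_scalars` would otherwise reorder past `hD`
  set D := q ^ 2 - q + 1
  match_scalars <;> field_simp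

theorem lie_h_f (hD : q ^ 2 - q + 1 ≠ 0)
    (h0m1 : ⁅d0, dm1⁆ = (-(q ^ 2 - q + 1)) • dm1 + (1 - q) • d0) :
    ⁅h q d0, f q dm1 d0⁆ = -f q dm1 d0 := by
  simp only [h, f, lie_add, smul_lie, lie_smul, lie_self, smul_zero, add_zero, h0m1, smul_add,
    smul_smul]
  set D := q ^ 2 - q + 1
  match_scalars <;> field_simp
  ring

theorem lie_e_f (hD : q ^ 2 - q + 1 ≠ 0)
    (h01 : ⁅d0, d1⁆ = (q ^ 2 - q + 1) • d1 + (1 - q) • d0)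
    (h0m1 : ⁅d0, dm1⁆ = (-(q ^ 2 - q + 1)) • dm1 + (1 - q) • d0)
    (hm11 : ⁅dm1, d1⁆ = (2 : K) • d0 + (1 - q) • (d1 - dm1)) :
    ⁅e q d0 d1, f q dm1 d0⁆ = (-2 * q) • h q d0 := by
  have h10 : ⁅d1, d0⁆ = -((q ^ 2 - q + 1) • d1 + (1 - q) • d0) := by rw [← lie_skew, h01]
  have h1m1 : ⁅d1, dm1⁆ = -((2 : K) • d0 + (1 - q) • (d1 - dm1)) := by rw [← lie_skew, hm11]
  simp only [h, e, f, lie_add, add_lie, smul_lie, lie_smul, lie_self, smul_zero, add_zero,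
    h10, h0m1, h1m1, smul_add, smul_sub, smul_neg, smul_smul]
  set D := q ^ 2 - q + 1 with hD_def
  match_scalars <;> field_simp
  · linear_combination (-2 : K) * hD_def
  all_goals ring

end DeformedSl2

theorem lie_smul_smul_of_lie_eq_smul {R L : Type*} [CommRing R] [LieRing L] [LieAlgebra R L]
    {h e f : L} {c t : R} (hef : ⁅e, f⁆ = (-2 * t) • h) (hct : c * c * t = 1) :
    ⁅c • e, c • f⁆ = (-2 : R) • h := by
  rw [lie_smul, smul_lie, hef, smul_smul, smul_smul]
  congr 1
  linear_combination (-2 : R) * hct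

/-- Elements of a real Lie algebra satisfying the q-deformed `sl₂` relations give rise,
after an explicit change of basis, to elements satisfying the standard `sl₂` relations. -/
theorem deformed_sl2_iso_sl2 {L : Type*} [LieRing L] [LieAlgebra ℝ L]
    (q : ℝ) (hq : q > 0) (dm1 d0 d1 : L)
    (h01 : ⁅d0, d1⁆ = (q ^ 2 - q + 1) • d1 + (1 - q) • d0)
    (h0m1 : ⁅d0, dm1⁆ = (-(q ^ 2 - q + 1)) • dm1 + (1 - q) • d0)
    (hm11 : ⁅dm1, d1⁆ = (2 : ℝ) • d0 + (1 - q) • (d1 - dm1)) :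
    let F : L := (Real.sqrt q)⁻¹ • (dm1 + ((q - 1) / (q ^ 2 - q + 1)) • d0)
    let H : L := (1 / (q ^ 2 - q + 1)) • d0
    let E : L := (Real.sqrt q)⁻¹ • (d1 + ((1 - q) / (q ^ 2 - q + 1)) • d0)
    ⁅H, E⁆ = E ∧ ⁅H, F⁆ = -F ∧ ⁅E, F⁆ = (-2 : ℝ) • H := by
  intro F H E
  have hD : q ^ 2 - q + 1 ≠ 0 := by nlinarith [sq_nonneg (q - 1)]
  have hscale : (Real.sqrt q)⁻¹ * (Real.sqrt q)⁻¹ * q = 1 := by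
    rw [← mul_inv, Real.mul_self_sqrt hq.le, inv_mul_cancel₀ hq.ne']
  refine ⟨?_, ?_, ?_⟩
  · change ⁅DeformedSl2.h q d0, _ • DeformedSl2.e q d0 d1⁆ = _ • DeformedSl2.e q d0 d1
    rw [lie_smul, DeformedSl2.lie_h_e hD h01]
  · change ⁅DeformedSl2.h q d0, _ • DeformedSl2.f q dm1 d0⁆ = -(_ • DeformedSl2.f q dm1 d0)
    rw [lie_smul, DeformedSl2.lie_h_f hD h0m1, smul_neg]
  · exact lie_smul_smul_of_lie_eq_smul (DeformedSl2.lie_e_f hD h01 h0m1 hm11) hscale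
end

section
/- Let q be a real number with q > 0 and let s = √q. The 2×2 real matrices A₋₁ with rows ((1-q)/2, 0), (s, (q-1)/2); A₀ with rows ((q²-q+1)/2, 0), (0, -(q²-q+1)/2); and A₁ with rows ((q-1)/2, -s), (0, (1-q)/2) satisfy, under the matrix commutator [A,B] = AB - BA: [A₀,A₁] = (q²-q+1)·A₁ + (1-q)·A₀, [A₀,A₋₁] = -(q²-q+1)·A₋₁ + (1-q)·A₀, and [A₋₁,A₁] = 2·A₀ + (1-q)·(A₁ - A₋₁). In particular the q-deformed sl₂ Lie algebra admits a 2-dimensional matrix representation. -/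
namespace DeformedSl2

variable {R : Type*} [Field R] [NeZero (2 : R)]

def Am1 (q s : R) : Matrix (Fin 2) (Fin 2) R := !![(1 - q) / 2, 0; s, (q - 1) / 2]

def A0 (q : R) : Matrix (Fin 2) (Fin 2) R := !![(q ^ 2 - q + 1) / 2, 0; 0, -(q ^ 2 - q + 1) / 2]

def A1 (q s : R) : Matrix (Fin 2) (Fin 2) R := !![(q - 1) / 2, -s; 0, (1 - q) / 2]

theorem lie_A0_A1 (q s : R) :
    ⁅A0 q, A1 q s⁆ = (q ^ 2 - q + 1) • A1 q s + (1 - q) • A0 q := by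
  ext i j
  fin_cases i <;> fin_cases j <;> simp [A0, A1, Ring.lie_def] <;> field_simp <;> ring

theorem lie_A0_Am1 (q s : R) :
    ⁅A0 q, Am1 q s⁆ = (-(q ^ 2 - q + 1)) • Am1 q s + (1 - q) • A0 q := by
  ext i j
  fin_cases i <;> fin_cases j <;> simp [A0, Am1, Ring.lie_def] <;> field_simp <;> ring

theorem lie_Am1_A1 {q s : R} (hs : s * s = q) :
    ⁅Am1 q s, A1 q s⁆ = (2 : R) • A0 q + (1 - q) • (A1 q s - Am1 q s) := by
  subst hs
  ext i j
  fin_cases i <;> fin_cases j <;> simp [A0, A1, Am1, Ring.lie_def] <;> field_simp <;> ring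

end DeformedSl2

/-- The q-deformed `sl₂` Lie algebra admits a 2-dimensional matrix representation. -/
theorem deformed_sl2_two_dim_rep (q : ℝ) (hq : q > 0) :
    let s : ℝ := Real.sqrt q
    let Am1 : Matrix (Fin 2) (Fin 2) ℝ := !![(1 - q) / 2, 0; s, (q - 1) / 2]
    let A0 : Matrix (Fin 2) (Fin 2) ℝ :=
      !![(q ^ 2 - q + 1) / 2, 0; 0, -(q ^ 2 - q + 1) / 2]
    let A1 : Matrix (Fin 2) (Fin 2) ℝ := !![(q - 1) / 2, -s; 0, (1 - q) / 2]
    (A0 * A1 - A1 * A0 = (q ^ 2 - q + 1) • A1 + (1 - q) • A0) ∧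
    (A0 * Am1 - Am1 * A0 = (-(q ^ 2 - q + 1)) • Am1 + (1 - q) • A0) ∧
    (Am1 * A1 - A1 * Am1 = (2 : ℝ) • A0 + (1 - q) • (A1 - Am1)) := by
  intro s
  simpa only [Ring.lie_def] using
    ⟨DeformedSl2.lie_A0_A1 q s, DeformedSl2.lie_A0_Am1 q s,
      DeformedSl2.lie_Am1_A1 (Real.mul_self_sqrt hq.le)⟩
end

section
/- Let q be a nonzero real number. Then the 2×2 real matrices satisfy G_q · T_q = q · (T_{q⁻¹} · G_q) and G_q · S_q = q · (S_{q⁻¹} · G_q), where T_{q⁻¹} and S_{q⁻¹} denote the matrices T and S with parameter 1/q. -/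
/-!
Multiplying the scalar `q` into `T_{q⁻¹}` and `S_{q⁻¹}` clears the inverse, leaving the
matrices `!![1, q; 0, q]` and `!![0, -q; 1, 0]`; both relations then become polynomial matrix
identities that hold over any commutative ring.
-/

open Matrix

section Field

variable {K : Type*} [Field K] {q : K}

theorem smul_translation_inv (hq : q ≠ 0) : q • !![q⁻¹, 1; 0, 1] = !![1, q; 0, q] := by
  ext i j
  fin_cases i <;> fin_cases j <;> simp [hq]

theorem smul_inversion_inv (hq : q ≠ 0) : q • !![0, -1; q⁻¹, 0] = !![0, -q; 1, 0] := by
  ext i j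
  fin_cases i <;> fin_cases j <;> simp [hq]

end Field

section CommRing

variable {R : Type*} [CommRing R] (q : R)

theorem transition_mul_translation :
    !![q, 1 - q; q - 1, 1] * !![q, 1; 0, 1] = !![1, q; 0, q] * !![q, 1 - q; q - 1, 1] := by
  simp only [mul_fin_two, EmbeddingLike.apply_eq_iff_eq, vecCons_inj, and_true]
  refine ⟨⟨?_, ?_⟩, ?_, ?_⟩ <;> ring

theorem transition_mul_inversion :
    !![q, 1 - q; q - 1, 1] * !![0, -1; q, 0] = !![0, -q; 1, 0] * !![q, 1 - q; q - 1, 1] := by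
  simp only [mul_fin_two, EmbeddingLike.apply_eq_iff_eq, vecCons_inj, and_true]
  refine ⟨⟨?_, ?_⟩, ?_, ?_⟩ <;> ring

end CommRing

/-- The matrices of `g_q`, `T_q` and `S_q` satisfy `G_q T_q = q T_{q⁻¹} G_q` and
`G_q S_q = q S_{q⁻¹} G_q`. -/
theorem gq_Tq_Sq_relations (q : ℝ) (hq : q ≠ 0) :
    let T : ℝ → Matrix (Fin 2) (Fin 2) ℝ := fun p => !![p, 1; 0, 1]
    let S : ℝ → Matrix (Fin 2) (Fin 2) ℝ := fun p => !![0, -1; p, 0]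
    let G : Matrix (Fin 2) (Fin 2) ℝ := !![q, 1 - q; q - 1, 1]
    G * T q = q • (T (1 / q) * G) ∧ G * S q = q • (S (1 / q) * G) := by
  intro T S G
  simp only [T, S, G, one_div, ← smul_mul, smul_translation_inv hq, smul_inversion_inv hq]
  exact ⟨transition_mul_translation q, transition_mul_inversion q⟩
end

section
/- Let q be a nonzero real number, x a real number with 1+(q-1)x ≠ 0 and 1+(x-1)q ≠ 0, and let h : ℝ → ℝ be differentiable at ξ := g_q(x). Then under the reparametrization ξ = g_q(x) the three operators transform as: (1+(q-1)x)·(d/dx)[h(g_q(x))] = q·(1+(q⁻¹-1)·ξ)·h'(ξ); (1+(x-1)q)·(1+(q-1)x)·(d/dx)[h(g_q(x))] = (q²-q+1)·ξ·h'(ξ); and (1+(x-1)q)·x·(d/dx)[h(g_q(x))] = q·(1+(ξ-1)·q⁻¹)·ξ·h'(ξ). -/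
/-- The q-rational transition map. -/
noncomputable def gq (q x : ℝ) : ℝ := (1 + (x - 1) * q) / (1 + (q - 1) * x)

/-! `g_q` is a Möbius map of determinant `q² - q + 1`, so `g_q' = (q² - q + 1) / (1 + (q - 1) x)²`.
Each identity is then the chain rule for `h ∘ g_q`, after the factor in front of `h'(ξ)` is written
over the common denominator `1 + (q - 1) x`. -/

theorem hasDerivAt_moebius {a b c d x : ℝ} (hx : c * x + d ≠ 0) :
    HasDerivAt (fun y => (a * y + b) / (c * y + d)) ((a * d - b * c) / (c * x + d) ^ 2) x := by
  have hnum : HasDerivAt (fun y => a * y + b) a x := by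
    simpa using ((hasDerivAt_id x).const_mul a).add_const b
  have hden : HasDerivAt (fun y => c * y + d) c x := by
    simpa using ((hasDerivAt_id x).const_mul c).add_const d
  exact (hnum.div hden hx).congr_deriv (by ring)

theorem gq_eq_moebius (q : ℝ) :
    gq q = fun y => (q * y + (1 - q)) / ((q - 1) * y + 1) := by
  funext y
  unfold gq
  congr 1 <;> ring

theorem hasDerivAt_gq {q x : ℝ} (hx : 1 + (q - 1) * x ≠ 0) :
    HasDerivAt (gq q) ((q ^ 2 - q + 1) / (1 + (q - 1) * x) ^ 2) x := by
  rw [gq_eq_moebius]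
  exact (hasDerivAt_moebius (a := q) (b := 1 - q) (by rwa [add_comm])).congr_deriv
    (by ring)

theorem gq_mul_denom {q x : ℝ} (hx : 1 + (q - 1) * x ≠ 0) :
    gq q x * (1 + (q - 1) * x) = 1 + (x - 1) * q :=
  div_mul_cancel₀ _ hx

theorem mul_one_add_inv_sub_one_mul_gq {q x : ℝ} (hq : q ≠ 0) (hx : 1 + (q - 1) * x ≠ 0) :
    q * (1 + (q⁻¹ - 1) * gq q x) = (q ^ 2 - q + 1) / (1 + (q - 1) * x) := by
  rw [eq_div_iff hx]
  linear_combination (1 - q) * gq_mul_denom hx + gq q x * (1 + (q - 1) * x) * mul_inv_cancel₀ hq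

theorem mul_one_add_gq_sub_one_mul_inv {q x : ℝ} (hq : q ≠ 0) (hx : 1 + (q - 1) * x ≠ 0) :
    q * (1 + (gq q x - 1) * q⁻¹) = (q ^ 2 - q + 1) * x / (1 + (q - 1) * x) := by
  rw [eq_div_iff hx]
  linear_combination gq_mul_denom hx + (gq q x - 1) * (1 + (q - 1) * x) * mul_inv_cancel₀ hq

theorem reparametrization_by_gq_general (q x : ℝ) (hq : q ≠ 0)
    (hx1 : 1 + (q - 1) * x ≠ 0)
    (h : ℝ → ℝ) (hh : DifferentiableAt ℝ h (gq q x)) :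
    ((1 + (q - 1) * x) * deriv (fun y => h (gq q y)) x
        = q * ((1 + (q⁻¹ - 1) * gq q x) * deriv h (gq q x))) ∧
    ((1 + (x - 1) * q) * (1 + (q - 1) * x) * deriv (fun y => h (gq q y)) x
        = (q ^ 2 - q + 1) * (gq q x * deriv h (gq q x))) ∧
    ((1 + (x - 1) * q) * x * deriv (fun y => h (gq q y)) x
        = q * ((1 + (gq q x - 1) * q⁻¹) * (gq q x * deriv h (gq q x)))) := by
  have hchain : deriv (fun y => h (gq q y)) x
      = deriv h (gq q x) * ((q ^ 2 - q + 1) / (1 + (q - 1) * x) ^ 2) :=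
    (hh.hasDerivAt.comp x (hasDerivAt_gq hx1)).deriv
  rw [hchain]
  refine ⟨?_, ?_, ?_⟩
  · rw [← mul_assoc q, mul_one_add_inv_sub_one_mul_gq hq hx1]
    field_simp
  · rw [← gq_mul_denom hx1]
    field_simp
  · rw [← mul_assoc q, mul_one_add_gq_sub_one_mul_inv hq hx1, ← gq_mul_denom hx1]
    field_simp

/-- Under the reparametrization `ξ = g_q(x)`, the operators `D₋₁, D₀, D₁` with parameter
`q` become the corresponding operators with parameter `q⁻¹` (up to factors). -/
theorem reparametrization_by_gq (q x : ℝ) (hq : q ≠ 0)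
    (hx1 : 1 + (q - 1) * x ≠ 0) (hx2 : 1 + (x - 1) * q ≠ 0)
    (h : ℝ → ℝ) (hh : DifferentiableAt ℝ h (gq q x)) :
    ((1 + (q - 1) * x) * deriv (fun y => h (gq q y)) x
        = q * ((1 + (q⁻¹ - 1) * gq q x) * deriv h (gq q x))) ∧
    ((1 + (x - 1) * q) * (1 + (q - 1) * x) * deriv (fun y => h (gq q y)) x
        = (q ^ 2 - q + 1) * (gq q x * deriv h (gq q x))) ∧
    ((1 + (x - 1) * q) * x * deriv (fun y => h (gq q y)) x
        = q * ((1 + (gq q x - 1) * q⁻¹) * (gq q x * deriv h (gq q x)))) :=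
  reparametrization_by_gq_general q x hq hx1 h hh
end

section
/- Let q be a nonzero real number, n ≥ 1, and let a₁, a₂, …, a_{2n} be natural numbers. Set U_q = T_q·S_q·T_q and M(q) = T_q^{a₁}·U_q^{a₂}·T_q^{a₃}·⋯·U_q^{a_{2n}} (products of 2×2 matrices). Then G_q · M(q) · (1,0)ᵀ = q^{N} · (M(q⁻¹) · (q, q-1)ᵀ), where N = a₁ + 3a₂ + a₃ + 3a₄ + ⋯ + a_{2n-1} + 3a_{2n} and M(q⁻¹) is the same product formed with parameter 1/q. (Projectively, the vector (1,0)ᵀ represents the point ∞ whose image under M(q) is the right q-rational [r/s]_q^♯, and (q,q-1)ᵀ represents 1/(1-q⁻¹), whose image under M(q⁻¹) is the left q-rational [r/s]_{q⁻¹}^♭; thus g_q maps [r/s]_q^♯ to [r/s]_{q⁻¹}^♭.) -/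
open Matrix

/-- The matrix of `T_q`. -/
def Tmat (q : ℝ) : Matrix (Fin 2) (Fin 2) ℝ := !![q, 1; 0, 1]

/-- The matrix of `S_q`. -/
def Smat (q : ℝ) : Matrix (Fin 2) (Fin 2) ℝ := !![0, -1; q, 0]

/-- The matrix of `U_q = T_q S_q T_q`. -/
def Umat (q : ℝ) : Matrix (Fin 2) (Fin 2) ℝ := Tmat q * Smat q * Tmat q

/-- The matrix of the q-rational transition map `g_q`. -/
def Gmat (q : ℝ) : Matrix (Fin 2) (Fin 2) ℝ := !![q, 1 - q; q - 1, 1]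

/-!
`G_q` intertwines the generators at `q` with those at `q⁻¹` up to scalars:
`G_q T_q = q • T_{q⁻¹} G_q` and `G_q U_q = q³ • U_{q⁻¹} G_q`. Hence `G_q M(q) = q^N • M(q⁻¹) G_q`,
and it remains to apply this to `(1,0)ᵀ`, which `G_q` sends to `(q, q-1)ᵀ`.
-/

theorem SemiconjBy.list_prod_map {ι M : Type*} [Monoid M] {a : M} {f g : ι → M} (l : List ι)
    (h : ∀ i ∈ l, SemiconjBy a (f i) (g i)) :
    SemiconjBy a (l.map f).prod (l.map g).prod := by
  induction l with
  | nil => exact SemiconjBy.one_right a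
  | cons i l ih =>
    simp only [List.map_cons, List.prod_cons]
    exact (h i List.mem_cons_self).mul_right (ih fun j hj => h j (List.mem_cons_of_mem i hj))

theorem List.prod_map_smul {ι M N : Type*} [CommMonoid M] [Monoid N] [MulAction M N]
    [IsScalarTower M N N] [SMulCommClass M N N] (l : List ι) (b : ι → M) (f : ι → N) :
    (l.map fun i => b i • f i).prod = (l.map b).prod • (l.map f).prod := by
  induction l with
  | nil => simp
  | cons i l ih => simp only [List.map_cons, List.prod_cons, ih, smul_mul_smul_comm]

section

variable {q : ℝ}

theorem semiconjBy_Gmat_Tmat (hq : q ≠ 0) : SemiconjBy (Gmat q) (Tmat q) (q • Tmat q⁻¹) := by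
  unfold SemiconjBy
  ext i j
  fin_cases i <;> fin_cases j <;>
    simp [Gmat, Tmat, Matrix.mul_apply, Fin.sum_univ_two] <;> field_simp <;> ring

theorem semiconjBy_Gmat_Umat (hq : q ≠ 0) : SemiconjBy (Gmat q) (Umat q) (q ^ 3 • Umat q⁻¹) := by
  unfold SemiconjBy
  ext i j
  fin_cases i <;> fin_cases j <;>
    simp [Gmat, Umat, Tmat, Smat, Matrix.mul_apply, Fin.sum_univ_two] <;> field_simp <;> ring

theorem semiconjBy_Gmat_ite_pow (hq : q ≠ 0) (p : Prop) [Decidable p] (k : ℕ) :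
    SemiconjBy (Gmat q) ((if p then Tmat q else Umat q) ^ k)
      (q ^ (if p then k else 3 * k) • (if p then Tmat q⁻¹ else Umat q⁻¹) ^ k) := by
  split_ifs
  · simpa only [smul_pow] using (semiconjBy_Gmat_Tmat hq).pow_right k
  · simpa only [smul_pow, ← pow_mul] using (semiconjBy_Gmat_Umat hq).pow_right k

theorem Gmat_mulVec_one_zero : Gmat q *ᵥ ![1, 0] = ![q, q - 1] := by
  ext i
  fin_cases i <;> simp [Gmat]

end

theorem gq_sharp_to_flat_general (q : ℝ) (hq : q ≠ 0) (n : ℕ)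
    (a : Fin (2 * n) → ℕ) :
    let M : ℝ → Matrix (Fin 2) (Fin 2) ℝ := fun p =>
      ((List.finRange (2 * n)).map
        (fun (i : Fin (2 * n)) => (if i.val % 2 = 0 then Tmat p else Umat p) ^ (a i))).prod
    let N : ℕ := ∑ i : Fin (2 * n), (if (i : ℕ) % 2 = 0 then a i else 3 * a i)
    (Gmat q * M q).mulVec ![1, 0] = q ^ N • (M (1 / q)).mulVec ![q, q - 1] := by
  intro M N
  have hM : SemiconjBy (Gmat q) (M q) (q ^ N • M q⁻¹) := by
    have hprod := SemiconjBy.list_prod_map (List.finRange (2 * n))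
      fun i _ => semiconjBy_Gmat_ite_pow hq (i.val % 2 = 0) (a i)
    have hN : ((List.finRange (2 * n)).map
        fun i : Fin (2 * n) => q ^ (if i.val % 2 = 0 then a i else 3 * a i)).prod = q ^ N := by
      rw [← Fin.prod_univ_def, Finset.prod_pow_eq_pow_sum]
    rwa [List.prod_map_smul, hN] at hprod
  rw [hM.eq, smul_mul_assoc, smul_mulVec, ← mulVec_mulVec, Gmat_mulVec_one_zero, one_div]

/-- `g_q` maps the right q-rational `[r/s]_q^♯` to the left q-rational `[r/s]_{q⁻¹}^♭`:
in matrix form, `G_q · M(q) · (1,0)ᵀ = q^N · M(q⁻¹) · (q, q-1)ᵀ` where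
`M(q) = T_q^{a₁} U_q^{a₂} ⋯ U_q^{a₂ₙ}` and `N = a₁ + 3a₂ + ⋯ + a₂ₙ₋₁ + 3a₂ₙ`. -/
theorem gq_sharp_to_flat (q : ℝ) (hq : q ≠ 0) (n : ℕ) (hn : 1 ≤ n)
    (a : Fin (2 * n) → ℕ) :
    let M : ℝ → Matrix (Fin 2) (Fin 2) ℝ := fun p =>
      ((List.finRange (2 * n)).map
        (fun (i : Fin (2 * n)) => (if i.val % 2 = 0 then Tmat p else Umat p) ^ (a i))).prod
    let N : ℕ := ∑ i : Fin (2 * n), (if (i : ℕ) % 2 = 0 then a i else 3 * a i)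
    (Gmat q * M q).mulVec ![1, 0] = q ^ N • (M (1 / q)).mulVec ![q, q - 1] :=
  gq_sharp_to_flat_general q hq n a
end

section
/- Let q be a nonzero real number and x a real number with q - 1 - q·x ≠ 0. Set C₂ = (q(1-q)x - q)/(q-1-qx) and define γ(t) = (e^{qt} + C₂·((q-1)/q)·e^{-(q-1)²t}) / ((1-q)·e^{qt} + C₂·e^{-(q-1)²t}). Then γ(0) = x, and for every real t at which the denominator (1-q)·e^{qt} + C₂·e^{-(q-1)²t} is nonzero, γ'(t) = (1 + (q-1)·γ(t))·(1 + (γ(t)-1)·q). In other words, γ is the integral curve through x of the vector field associated to D₀, solving the Riccati equation γ' = 1-q + (-1+3q-q²)·γ + q(q-1)·γ². -/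
/-!
Writing `γ = N / D` linearizes the Riccati equation: if `(N, D)` solves the linear system
`N' = a N + b D`, `D' = c N + d D`, then `γ' = b + (a - d) γ - c γ²`. Here `N` and `D` are
combinations of the eigensolutions `e^{qt} (1, 1 - q)` and `e^{-(q-1)²t} ((q-1)/q, 1)` of the
system with `a = q - (q - 1)²`, `b = 1 - q`, `c = q (1 - q)`, `d = 0`, and the constant `C₂`
is chosen so that `N 0 = x D 0`.
-/

open Real

theorem HasDerivAt.div_of_linear_system {N D : ℝ → ℝ} {t : ℝ} (a b c d : ℝ)
    (hN : HasDerivAt N (a * N t + b * D t) t) (hD : HasDerivAt D (c * N t + d * D t) t)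
    (hDt : D t ≠ 0) :
    HasDerivAt (fun s => N s / D s) (b + (a - d) * (N t / D t) - c * (N t / D t) ^ 2) t := by
  refine (hN.div hD hDt).congr_deriv ?_
  field_simp
  ring

theorem hasDerivAt_exp_mul (μ t : ℝ) : HasDerivAt (fun s => exp (μ * s)) (μ * exp (μ * t)) t := by
  simpa [mul_comm] using ((hasDerivAt_id t).const_mul μ).exp

/-- The integral curve of the vector field associated to `D₀` through `x` solves the
Riccati equation `γ' = (1+(q-1)γ)(1+(γ-1)q)`. -/
theorem integral_curve_D0 (q : ℝ) (hq : q ≠ 0) (x : ℝ) (hx : q - 1 - q * x ≠ 0) :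
    let C2 : ℝ := (q * (1 - q) * x - q) / (q - 1 - q * x)
    let γ : ℝ → ℝ := fun t =>
      (Real.exp (q * t) + C2 * ((q - 1) / q) * Real.exp (-(q - 1) ^ 2 * t)) /
        ((1 - q) * Real.exp (q * t) + C2 * Real.exp (-(q - 1) ^ 2 * t))
    γ 0 = x ∧
      ∀ t : ℝ, (1 - q) * Real.exp (q * t) + C2 * Real.exp (-(q - 1) ^ 2 * t) ≠ 0 →
        HasDerivAt γ ((1 + (q - 1) * γ t) * (1 + (γ t - 1) * q)) t := by
  intro C2 γ
  refine ⟨?_, fun t ht => ?_⟩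
  · have hD0 : (1 - q) + C2 ≠ 0 := by
      have hpos : q ^ 2 - q + 1 ≠ 0 := by nlinarith [sq_nonneg (q - 1), sq_nonneg q]
      have : (1 - q) + C2 = -(q ^ 2 - q + 1) / (q - 1 - q * x) := by
        simp only [C2]
        field_simp
        ring
      rw [this]
      exact div_ne_zero (neg_ne_zero.2 hpos) hx
    simp only [γ, mul_zero, exp_zero, mul_one]
    rw [div_eq_iff hD0]
    simp only [C2]
    field_simp
    ring
  · have hN := (hasDerivAt_exp_mul q t).fun_add
      ((hasDerivAt_exp_mul (-(q - 1) ^ 2) t).const_mul (C2 * ((q - 1) / q)))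
    have hD := ((hasDerivAt_exp_mul q t).const_mul (1 - q)).fun_add
      ((hasDerivAt_exp_mul (-(q - 1) ^ 2) t).const_mul C2)
    refine ((hN.congr_deriv ?_).div_of_linear_system (q - (q - 1) ^ 2) (1 - q) (q * (1 - q)) 0
      (hD.congr_deriv ?_) ht).congr_deriv ?_
    · field_simp
      ring
    · field_simp
      ring
    · ring
end
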